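/- (Saliency / singular value decomposition transfer of maximality.) Let n be a positive integer, let P and Q be Borel probability measures on ℝ^n with finite second moments, and let π ∈ Π(P,Q) satisfy ∫ xᵀMy dπ = sup over π̃ ∈ Π(P,Q) of ∫ xᵀMy dπ̃, where M = U S Vᵀ with U, V orthogonal n×n matrices and S diagonal with nonnegative entries. Let √S denote the entrywise square root of S, let T₁(x) = √S Uᵀ x and T₂(y) = √S Vᵀ y, let P̃ and Q̃ be the pushforwards of P under T₁ and of Q under T₂, and let π̃₀ be the pushforward of π under (x,y) ↦ (T₁(x), T₂(y)). Then π̃₀ ∈ Π(P̃,Q̃) and ∫ x·y dπ̃₀ = sup over π̃ ∈ Π(P̃,Q̃) of ∫ x·y dπ̃. -/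

import Mathlib

/-!
Since `T₁ x ⬝ᵥ T₂ y = x ⬝ᵥ M *ᵥ y`, pushing forward along `(T₁, T₂)` maps couplings of `P, Q` to
couplings of `P̃, Q̃` without changing the value of the objective. Conversely, every coupling of
`P̃, Q̃` arises this way: draw a point from it and then each coordinate from the conditional law of
`P` given `T₁` (resp. of `Q` given `T₂`); these disintegrations exist because `ℝⁿ` is standard
Borel. So both suprema are taken over the same set of values, and the maximizer `π` transfers.
Finite second moments bound the objective by a quadratic, so these sets of values are bounded
above and `sSup` is a genuine supremum.
-/

open MeasureTheory Matrix

/-- The set of couplings of two measures on `ℝ^n`. -/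
def couplings {n : ℕ} (P Q : Measure (Fin n → ℝ)) :
    Set (Measure ((Fin n → ℝ) × (Fin n → ℝ))) :=
  {π | IsProbabilityMeasure π ∧ π.map Prod.fst = P ∧ π.map Prod.snd = Q}

open ProbabilityTheory

section Gluing

variable {α β : Type*} [MeasurableSpace α] [MeasurableSpace β]
  {α' β' : Type*} [MeasurableSpace α'] [MeasurableSpace β']

lemma MeasureTheory.Measure.map_fst_parallelComp_comp (μ : Measure (α × α')) (κ : Kernel α β)
    [IsSFiniteKernel κ] (η : Kernel α' β') [IsMarkovKernel η] :
    ((κ ∥ₖ η) ∘ₘ μ).map Prod.fst = κ ∘ₘ μ.map Prod.fst := by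
  have hker : (κ ∥ₖ η).map Prod.fst = κ.comap Prod.fst measurable_fst := by
    ext1 q
    rw [Kernel.map_apply _ measurable_fst, Kernel.parallelComp_apply, Measure.map_fst_prod,
      measure_univ, one_smul, Kernel.comap_apply]
  rw [Measure.map_comp _ _ measurable_fst, hker, ← Kernel.comp_deterministic_eq_comap,
    ← Measure.comp_assoc, Measure.deterministic_comp_eq_map]

lemma MeasureTheory.Measure.map_snd_parallelComp_comp (μ : Measure (α × α')) (κ : Kernel α β)
    [IsMarkovKernel κ] (η : Kernel α' β') [IsSFiniteKernel η] :
    ((κ ∥ₖ η) ∘ₘ μ).map Prod.snd = η ∘ₘ μ.map Prod.snd := by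
  have hker : (κ ∥ₖ η).map Prod.snd = η.comap Prod.snd measurable_snd := by
    ext1 q
    rw [Kernel.map_apply _ measurable_snd, Kernel.parallelComp_apply, Measure.map_snd_prod,
      measure_univ, one_smul, Kernel.comap_apply]
  rw [Measure.map_comp _ _ measurable_snd, hker, ← Kernel.comp_deterministic_eq_comap,
    ← Measure.comp_assoc, Measure.deterministic_comp_eq_map]

variable [StandardBorelSpace α] [Nonempty α] [StandardBorelSpace β] [Nonempty β]

lemma ae_map_condDistrib_id_eq_dirac (P : Measure α) [IsFiniteMeasure P] {T : α → β}
    (hT : Measurable T) :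
    ∀ᵐ b ∂P.map T, (condDistrib id T P b).map T = Measure.dirac b := by
  filter_upwards [condDistrib_comp T aemeasurable_id hT, condDistrib_self (μ := P) T]
    with b hcomp hself
  rw [← Kernel.map_apply _ hT, ← hcomp, ← Kernel.id_apply]
  exact hself

variable [StandardBorelSpace α'] [Nonempty α'] [StandardBorelSpace β'] [Nonempty β']

lemma exists_map_prodMap_eq (P : Measure α) (P' : Measure α') [IsFiniteMeasure P]
    [IsFiniteMeasure P'] {T : α → β} {T' : α' → β'} (hT : Measurable T) (hT' : Measurable T')
    {γ : Measure (β × β')} [IsProbabilityMeasure γ] (hγ : γ.map Prod.fst = P.map T)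
    (hγ' : γ.map Prod.snd = P'.map T') :
    ∃ π : Measure (α × α'), IsProbabilityMeasure π ∧ π.map Prod.fst = P ∧
      π.map Prod.snd = P' ∧ π.map (Prod.map T T') = γ := by
  refine ⟨(condDistrib id T P ∥ₖ condDistrib id T' P') ∘ₘ γ, inferInstance, ?_, ?_, ?_⟩
  · rw [Measure.map_fst_parallelComp_comp, hγ,
      condDistrib_comp_map hT.aemeasurable aemeasurable_id, Measure.map_id]
  · rw [Measure.map_snd_parallelComp_comp, hγ',
      condDistrib_comp_map hT'.aemeasurable aemeasurable_id, Measure.map_id]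
  · have hfib := ae_of_ae_map measurable_fst.aemeasurable
      (hγ ▸ ae_map_condDistrib_id_eq_dirac P hT)
    have hfib' := ae_of_ae_map measurable_snd.aemeasurable
      (hγ' ▸ ae_map_condDistrib_id_eq_dirac P' hT')
    rw [Measure.map_comp _ _ (hT.prodMap hT')]
    refine (Measure.comp_congr (η := Kernel.id) ?_).trans Measure.id_comp
    filter_upwards [hfib, hfib'] with q hq hq'
    rw [Kernel.map_apply _ (hT.prodMap hT'), Kernel.parallelComp_apply,
      ← Measure.map_prod_map _ _ hT hT', hq, hq', Measure.dirac_prod_dirac, Kernel.id_apply]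

end Gluing

lemma integral_le_of_abs_le_add {α β : Type*} [MeasurableSpace α] [MeasurableSpace β]
    {μ : Measure (α × β)} {f : α × β → ℝ} (hf : AEStronglyMeasurable f μ) {g : α → ℝ}
    {h : β → ℝ} (hg : Integrable g (μ.map Prod.fst)) (hh : Integrable h (μ.map Prod.snd))
    (hfgh : ∀ p, |f p| ≤ g p.1 + h p.2) :
    ∫ p, f p ∂μ ≤ ∫ x, g x ∂(μ.map Prod.fst) + ∫ y, h y ∂(μ.map Prod.snd) := by
  have hg' : Integrable (fun p => g p.1) μ :=
    (integrable_map_measure hg.aestronglyMeasurable measurable_fst.aemeasurable).mp hg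
  have hh' : Integrable (fun p => h p.2) μ :=
    (integrable_map_measure hh.aestronglyMeasurable measurable_snd.aemeasurable).mp hh
  have hfi : Integrable f μ := (hg'.add hh').mono' hf (ae_of_all _ hfgh)
  calc ∫ p, f p ∂μ ≤ ∫ p, g p.1 + h p.2 ∂μ :=
        integral_mono hfi (hg'.add hh') fun p => (le_abs_self _).trans (hfgh p)
    _ = _ := by
      rw [integral_add hg' hh', integral_map measurable_fst.aemeasurable hg.aestronglyMeasurable,
        integral_map measurable_snd.aemeasurable hh.aestronglyMeasurable]

lemma Matrix.abs_dotProduct_mulVec_le {m n : Type*} [Fintype m] [Fintype n] [DecidableEq m]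
    [DecidableEq n] (M : Matrix m n ℝ) :
    ∃ C, ∀ x y, |x ⬝ᵥ M *ᵥ y| ≤ C * ‖x‖ ^ 2 + C * ‖y‖ ^ 2 := by
  set B := LinearMap.toContinuousBilinearMap (toLinearMap₂' ℝ M : (m → ℝ) →ₗ[ℝ] (n → ℝ) →ₗ[ℝ] ℝ)
  refine ⟨‖B‖, fun x y => ?_⟩
  have hB := B.le_opNorm₂ x y
  rw [LinearMap.toContinuousBilinearMap_apply, toLinearMap₂'_apply', Real.norm_eq_abs] at hB
  nlinarith [mul_nonneg (norm_nonneg B) (sq_nonneg (‖x‖ - ‖y‖)),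
    mul_nonneg (norm_nonneg B) (add_nonneg (sq_nonneg ‖x‖) (sq_nonneg ‖y‖))]

lemma Matrix.mulVec_dotProduct_mulVec {k m n R : Type*} [Fintype k] [Fintype m] [Fintype n]
    [CommSemiring R] (A : Matrix k m R) (B : Matrix k n R) (x : m → R) (y : n → R) :
    A *ᵥ x ⬝ᵥ B *ᵥ y = x ⬝ᵥ (Aᵀ * B) *ᵥ y := by
  rw [dotProduct_mulVec, vecMul_mulVec, ← dotProduct_mulVec]

lemma Matrix.diagonal_sqrt_mul_diagonal_sqrt {n : Type*} [Fintype n] [DecidableEq n] {s : n → ℝ}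
    (hs : ∀ i, 0 ≤ s i) :
    diagonal (fun i => √(s i)) * diagonal (fun i => √(s i)) = diagonal s := by
  rw [diagonal_mul_diagonal]
  exact congrArg diagonal (funext fun i => Real.mul_self_sqrt (hs i))

section Couplings

variable {n : ℕ} {P Q : Measure (Fin n → ℝ)}

lemma map_mem_couplings {π : Measure ((Fin n → ℝ) × (Fin n → ℝ))} (hπ : π ∈ couplings P Q)
    {T₁ T₂ : (Fin n → ℝ) → (Fin n → ℝ)} (h₁ : Measurable T₁) (h₂ : Measurable T₂) :
    π.map (Prod.map T₁ T₂) ∈ couplings (P.map T₁) (Q.map T₂) := by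
  obtain ⟨hprob, rfl, rfl⟩ := hπ
  refine ⟨Measure.isProbabilityMeasure_map (h₁.prodMap h₂).aemeasurable, ?_, ?_⟩
  · rw [Measure.map_map measurable_fst (h₁.prodMap h₂), Measure.map_map h₁ measurable_fst]
    rfl
  · rw [Measure.map_map measurable_snd (h₁.prodMap h₂), Measure.map_map h₂ measurable_snd]
    rfl

lemma bddAbove_integral_couplings {f : (Fin n → ℝ) × (Fin n → ℝ) → ℝ} (hf : Continuous f)
    {g h : (Fin n → ℝ) → ℝ} (hg : Integrable g P) (hh : Integrable h Q)
    (hfgh : ∀ p, |f p| ≤ g p.1 + h p.2) :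
    BddAbove ((fun π => ∫ p, f p ∂π) '' couplings P Q) := by
  refine ⟨∫ x, g x ∂P + ∫ y, h y ∂Q, ?_⟩
  rintro _ ⟨π, ⟨-, rfl, rfl⟩, rfl⟩
  exact integral_le_of_abs_le_add hf.aestronglyMeasurable hg hh hfgh

end Couplings

theorem svd_transfer_maximality_general {n : ℕ}
    (P Q : Measure (Fin n → ℝ))
    [IsProbabilityMeasure P] [IsProbabilityMeasure Q]
    (hP : Integrable (fun x => ‖x‖ ^ 2) P) (hQ : Integrable (fun y => ‖y‖ ^ 2) Q)
    (U V : Matrix (Fin n) (Fin n) ℝ)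
    (s : Fin n → ℝ) (hs : ∀ i, 0 ≤ s i)
    (M : Matrix (Fin n) (Fin n) ℝ)
    (hM : M = U * Matrix.diagonal s * V.transpose)
    (π : Measure ((Fin n → ℝ) × (Fin n → ℝ))) (hπ : π ∈ couplings P Q)
    (hopt : (∫ p, p.1 ⬝ᵥ M.mulVec p.2 ∂π) =
      sSup ((fun π' => ∫ p, p.1 ⬝ᵥ M.mulVec p.2 ∂π') '' couplings P Q))
    (T₁ T₂ : (Fin n → ℝ) → (Fin n → ℝ))
    (hT₁ : T₁ = fun x => ((Matrix.diagonal fun i => Real.sqrt (s i)) * U.transpose).mulVec x)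
    (hT₂ : T₂ = fun y => ((Matrix.diagonal fun i => Real.sqrt (s i)) * V.transpose).mulVec y) :
    π.map (fun p => (T₁ p.1, T₂ p.2)) ∈ couplings (P.map T₁) (Q.map T₂) ∧
      (∫ p, p.1 ⬝ᵥ p.2 ∂(π.map fun p => (T₁ p.1, T₂ p.2))) =
        sSup ((fun π' => ∫ p, p.1 ⬝ᵥ p.2 ∂π') '' couplings (P.map T₁) (Q.map T₂)) := by
  have h₁ : Measurable T₁ := hT₁ ▸ by fun_prop
  have h₂ : Measurable T₂ := hT₂ ▸ by fun_prop
  have hfactor : ((diagonal fun i => √(s i)) * Uᵀ)ᵀ * ((diagonal fun i => √(s i)) * Vᵀ) = M := by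
    rw [transpose_mul, transpose_transpose, diagonal_transpose, Matrix.mul_assoc,
      ← Matrix.mul_assoc (diagonal _) (diagonal _), diagonal_sqrt_mul_diagonal_sqrt hs, hM,
      Matrix.mul_assoc]
  have hcost : ∀ μ : Measure ((Fin n → ℝ) × (Fin n → ℝ)),
      ∫ p, p.1 ⬝ᵥ p.2 ∂(μ.map (Prod.map T₁ T₂)) = ∫ p, p.1 ⬝ᵥ M *ᵥ p.2 ∂μ := by
    intro μ
    rw [integral_map (h₁.prodMap h₂).aemeasurable (by fun_prop)]
    simp only [hT₁, hT₂, Prod.map_fst, Prod.map_snd, mulVec_dotProduct_mulVec, hfactor]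
  obtain ⟨C, hC⟩ := abs_dotProduct_mulVec_le M
  have hbdd := bddAbove_integral_couplings (by fun_prop) (hP.const_mul C) (hQ.const_mul C)
    fun p => hC p.1 p.2
  change π.map (Prod.map T₁ T₂) ∈ _ ∧ ∫ p, p.1 ⬝ᵥ p.2 ∂(π.map (Prod.map T₁ T₂)) = _
  have hmem := map_mem_couplings hπ h₁ h₂
  refine ⟨hmem, (IsGreatest.csSup_eq ?_).symm⟩
  refine ⟨⟨_, hmem, rfl⟩, ?_⟩
  rintro _ ⟨γ, ⟨hγ, hγ₁, hγ₂⟩, rfl⟩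
  obtain ⟨π', hπ', hπ'₁, hπ'₂, rfl⟩ := exists_map_prodMap_eq P Q h₁ h₂ hγ₁ hγ₂
  simp only [hcost, hopt]
  exact le_csSup hbdd ⟨π', ⟨hπ', hπ'₁, hπ'₂⟩, rfl⟩

/-- saliency / SVD transfer of maximality: if `π` maximizes
`∫ xᵀMy dπ̃` over `Π(P,Q)`, where `M = U S Vᵀ` with `U, V` orthogonal and `S`
diagonal with nonnegative entries, then the pushforward of `π` under
`(x,y) ↦ (√S Uᵀ x, √S Vᵀ y)` maximizes `∫ x·y dπ̃` over `Π(P̃,Q̃)`, where `P̃, Q̃`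
are the corresponding pushforwards of `P, Q`. -/
theorem svd_transfer_maximality {n : ℕ} (hn : 0 < n)
    (P Q : Measure (Fin n → ℝ))
    [IsProbabilityMeasure P] [IsProbabilityMeasure Q]
    (hP : Integrable (fun x => ‖x‖ ^ 2) P) (hQ : Integrable (fun y => ‖y‖ ^ 2) Q)
    (U V : Matrix (Fin n) (Fin n) ℝ)
    (hU : U.transpose * U = 1) (hV : V.transpose * V = 1)
    (s : Fin n → ℝ) (hs : ∀ i, 0 ≤ s i)
    (M : Matrix (Fin n) (Fin n) ℝ)
    (hM : M = U * Matrix.diagonal s * V.transpose)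
    (π : Measure ((Fin n → ℝ) × (Fin n → ℝ))) (hπ : π ∈ couplings P Q)
    (hopt : (∫ p, p.1 ⬝ᵥ M.mulVec p.2 ∂π) =
      sSup ((fun π' => ∫ p, p.1 ⬝ᵥ M.mulVec p.2 ∂π') '' couplings P Q))
    (T₁ T₂ : (Fin n → ℝ) → (Fin n → ℝ))
    (hT₁ : T₁ = fun x => ((Matrix.diagonal fun i => Real.sqrt (s i)) * U.transpose).mulVec x)
    (hT₂ : T₂ = fun y => ((Matrix.diagonal fun i => Real.sqrt (s i)) * V.transpose).mulVec y) :
    π.map (fun p => (T₁ p.1, T₂ p.2)) ∈ couplings (P.map T₁) (Q.map T₂) ∧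
      (∫ p, p.1 ⬝ᵥ p.2 ∂(π.map fun p => (T₁ p.1, T₂ p.2))) =
        sSup ((fun π' => ∫ p, p.1 ⬝ᵥ p.2 ∂π') '' couplings (P.map T₁) (Q.map T₂)) :=
  svd_transfer_maximality_general P Q hP hQ U V s hs M hM π hπ hopt T₁ T₂ hT₁ hT₂
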